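/- Let S_L be a finite nonempty set of positive integers and let n₀ be an integer larger than every element of S_L. Set S_R = {n₀} ∪ {n₀ − m : m ∈ S_L}. Then for every k ≥ 1, the outcome of the heap of size k·n₀ in the partizan subtraction game (S_L, S_R) is R: Right wins both moving first and moving second. -/
import Mathlib


mutual
def LeftFirstWins (SL SR : Finset ℕ) : ℕ → Prop
  | n => ∃ s ∈ SL, ∃ (_ : 0 < s) (_ : s ≤ n), ¬ RightFirstWins SL SR (n - s)
  termination_by n => n
  decreasing_by omega
def RightFirstWins (SL SR : Finset ℕ) : ℕ → Prop
  | n => ∃ s ∈ SR, ∃ (_ : 0 < s) (_ : s ≤ n), ¬ LeftFirstWins SL SR (n - s)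
  termination_by n => n
  decreasing_by omega
end

inductive Outcome | P | L | R | N
deriving DecidableEq

open Classical in
noncomputable def outcome (SL SR : Finset ℕ) (n : ℕ) : Outcome :=
  if LeftFirstWins SL SR n then
    if RightFirstWins SL SR n then .N else .L
  else
    if RightFirstWins SL SR n then .R else .P

theorem notLeftMul (SL : Finset ℕ) (hpos : ∀ s ∈ SL, 0 < s)
    (n₀ : ℕ) (hn₀ : ∀ s ∈ SL, s < n₀) :
    ∀ j : ℕ, ¬ LeftFirstWins SL (insert n₀ (SL.image (n₀ - ·))) (j * n₀) := by
  intro j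
  induction j using Nat.strong_induction_on with
  | _ j ih =>
    rw [LeftFirstWins]
    rintro ⟨m, hm, hm0, hmle, hR⟩
    have hmn : m < n₀ := hn₀ m hm
    have hj1 : 1 ≤ j := by
      by_contra h
      interval_cases j <;> omega
    apply hR
    rw [RightFirstWins]
    refine ⟨n₀ - m, ?_, by omega, by have := Nat.le_mul_of_pos_left n₀ hj1; omega, ?_⟩
    · exact Finset.mem_insert_of_mem (Finset.mem_image_of_mem _ hm)
    · have : j * n₀ - m - (n₀ - m) = (j - 1) * n₀ := by
        cases j with
        | zero => omega
        | succ j' => simp [Nat.succ_mul]; omega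
      rw [this]
      exact ih (j - 1) (by omega)

theorem stmt_9 (SL : Finset ℕ) (hne : SL.Nonempty) (hpos : ∀ s ∈ SL, 0 < s)
    (n₀ : ℕ) (hn₀ : ∀ s ∈ SL, s < n₀) (k : ℕ) (hk : 1 ≤ k) :
    outcome SL (insert n₀ (SL.image (n₀ - ·))) (k * n₀) = .R := by
  have hn0pos : 0 < n₀ := lt_of_le_of_lt (hpos _ hne.choose_spec).le (hn₀ _ hne.choose_spec)
  have hnL := notLeftMul SL hpos n₀ hn₀
  have hR : RightFirstWins SL (insert n₀ (SL.image (n₀ - ·))) (k * n₀) := by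
    rw [RightFirstWins]
    refine ⟨n₀, Finset.mem_insert_self _ _, hn0pos, Nat.le_mul_of_pos_left _ hk, ?_⟩
    have : k * n₀ - n₀ = (k - 1) * n₀ := by
      cases k with
      | zero => omega
      | succ k' => simp [Nat.succ_mul]
    rw [this]; exact hnL (k - 1)
  unfold outcome
  rw [if_neg (hnL k), if_pos hR]
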